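/- Let Q be a connected quiver with a linear order on E, k a field, θ : V → ℝ generic with Σθ = 0, and λ : V → k with Σλ = 0. Let (x, x*) be a θ-stable pair satisfying the moment map equations with assigned spanning tree T = 𝑇(x, x*), let e be the largest non-loop edge of Q with e ∉ T, and let a be the smallest edge of the fundamental cycle C(T, e); assume a ≠ e (so a ∈ T). If the a-induced orientation on e is opposite to the orientation of e in Q, then x_e = 0; otherwise x*_e = 0. -/

import Mathlib

open Classical Finset

noncomputable section

/-- The equivalence relation on vertices generated by the edges in `D`:
`t e` and `h e` are related for every `e ∈ D`. -/
def joinedRel {V E : Type} (tl hd : E → V) (D : Set E) : V → V → Prop :=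
  Relation.EqvGen fun a b => ∃ e ∈ D, (tl e = a ∧ hd e = b) ∨ (tl e = b ∧ hd e = a)

/-- The graph `(V, D)` is connected. -/
def IsConn {V E : Type} (tl hd : E → V) (D : Set E) : Prop :=
  ∀ a b : V, joinedRel tl hd D a b

/-- `T ⊆ E` is a spanning tree: `(V, T)` is connected and `#T = #V - 1`. -/
def IsSpanningTree {V E : Type} [Fintype V] (tl hd : E → V) (T : Finset E) : Prop :=
  IsConn tl hd ↑T ∧ T.card + 1 = Fintype.card V

/-- The connected component of the vertex `v` in the graph with edge set `D`. -/
def component {V E : Type} [Fintype V] (tl hd : E → V) (D : Finset E) (v : V) : Finset V :=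
  Finset.univ.filter fun j => joinedRel tl hd (↑D) v j

/-- Genericity of a stability parameter. -/
def Generic {V : Type} [Fintype V] (θ : V → ℝ) : Prop :=
  ∀ J : Finset V, J.Nonempty → J ≠ Finset.univ → ∑ i ∈ J, θ i ≠ 0

/-- Auxiliary recursion computing the external activity: `S` is the set of remaining
edges and `C` the set of already contracted edges (an edge of the current, partially
contracted, quiver is a loop iff its endpoints are joined by edges of `C`).  At each
step the largest non-loop edge is contracted (if it lies in `T`) or deleted (otherwise);
once no non-loop edge remains (i.e. the contracted quiver has one vertex), the number of
remaining (loop) edges is returned. -/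
def extactAux {V E : Type} [LinearOrder E] (tl hd : E → V) (T : Finset E)
    (S C : Finset E) : ℕ :=
  if hne : (S.filter fun e => ¬ joinedRel tl hd (↑C) (tl e) (hd e)).Nonempty then
    if (S.filter fun e => ¬ joinedRel tl hd (↑C) (tl e) (hd e)).max' hne ∈ T then
      extactAux tl hd T
        (S.erase ((S.filter fun e => ¬ joinedRel tl hd (↑C) (tl e) (hd e)).max' hne))
        (insert ((S.filter fun e => ¬ joinedRel tl hd (↑C) (tl e) (hd e)).max' hne) C)
    else
      extactAux tl hd T
        (S.erase ((S.filter fun e => ¬ joinedRel tl hd (↑C) (tl e) (hd e)).max' hne)) C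
  else S.card
termination_by S.card
decreasing_by
  · exact Finset.card_lt_card (Finset.erase_ssubset
      (Finset.mem_of_mem_filter _ (Finset.max'_mem _ hne)))
  · exact Finset.card_lt_card (Finset.erase_ssubset
      (Finset.mem_of_mem_filter _ (Finset.max'_mem _ hne)))

/-- The external activity `extact(Q, T)` of a spanning tree `T`, with respect to a fixed
linear order on the edges. -/
def extact {V E : Type} [Fintype E] [LinearOrder E] (tl hd : E → V) (T : Finset E) : ℕ :=
  extactAux tl hd T Finset.univ ∅

/-- Isomorphism of toric representations. -/
def IsoRep {V E k : Type} [Field k] (tl hd : E → V) (x x' : E → k) : Prop :=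
  ∃ g : V → kˣ, ∀ e, x' e = (g (hd e) : k) * x e * ((g (tl e) : k))⁻¹

/-- Gauge equivalence (the `(kˣ)^V`-action) for representations of the double quiver. -/
def GaugeEquiv {V E k : Type} [Field k] (tl hd : E → V) (x xs x' xs' : E → k) : Prop :=
  ∃ g : V → kˣ,
    (∀ e, x' e = (g (hd e) : k) * x e * ((g (tl e) : k))⁻¹) ∧
    (∀ e, xs' e = (g (tl e) : k) * xs e * ((g (hd e) : k))⁻¹)

/-- The moment map equations for the parameter `lam`. -/
def MomentMap {V E k : Type} [Fintype E] [Field k] (tl hd : E → V) (lam : V → k)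
    (x xs : E → k) : Prop :=
  ∀ i : V,
    (∑ e ∈ Finset.univ.filter fun e => hd e = i, x e * xs e) -
      (∑ e ∈ Finset.univ.filter fun e => tl e = i, x e * xs e) = lam i

/-- `J` is closed for `(x, xs)`, with only the conditions for edges in `S` imposed. -/
def ClosedOn {V E k : Type} [Zero k] (tl hd : E → V) (x xs : E → k) (S : Set E)
    (J : Finset V) : Prop :=
  ∀ e ∈ S, (x e ≠ 0 → tl e ∈ J → hd e ∈ J) ∧ (xs e ≠ 0 → hd e ∈ J → tl e ∈ J)

/-- `θ`-stability of `(x, xs)` on the subquiver with vertex set `W` and edge set `S`. -/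
def StableSub {V E k : Type} [Zero k] (tl hd : E → V) (θ : V → ℝ) (x xs : E → k)
    (W : Finset V) (S : Set E) : Prop :=
  ∀ J : Finset V, J ⊆ W → ClosedOn tl hd x xs S J → J.Nonempty → J ≠ W →
    0 < ∑ i ∈ J, θ i

/-- Destabilising subsets for `(x, xs)` on the subquiver `(W, S)`. -/
def DestabSub {V E k : Type} [Zero k] (tl hd : E → V) (θ : V → ℝ) (x xs : E → k)
    (W : Finset V) (S : Set E) (J : Finset V) : Prop :=
  J ⊆ W ∧ J.Nonempty ∧ J ≠ W ∧ ClosedOn tl hd x xs S J ∧ ∑ i ∈ J, θ i ≤ 0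

/-- The projection identifying the vertex `a` with the vertex `b`, i.e. the quotient map
`V → V/e` for the contraction of an edge with tail `a` and head `b` (the quotient being
modelled on the subtype of vertices different from `a`). -/
def cProj {V : Type} (a b : V) (h : b ≠ a) (i : V) : {j : V // j ≠ a} :=
  if hi : i = a then ⟨b, h⟩ else ⟨i, hi⟩

/-- Tail map of the contracted quiver `Q/e`. -/
def contractTl {V E : Type} (tl hd : E → V) (e : E) (h : hd e ≠ tl e)
    (f : {f : E // f ≠ e}) : {j : V // j ≠ tl e} := cProj (tl e) (hd e) h (tl f.1)

/-- Head map of the contracted quiver `Q/e`. -/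
def contractHd {V E : Type} (tl hd : E → V) (e : E) (h : hd e ≠ tl e)
    (f : {f : E // f ≠ e}) : {j : V // j ≠ tl e} := cProj (tl e) (hd e) h (hd f.1)

/-- Contraction `θ/e` (or `λ/e`) of a parameter along the contraction of an edge with
tail `a` and head `b`: the new vertex `ι` (represented by `b`) gets the value
`θ a + θ b`, all other vertices keep their values. -/
def contractParam {V R : Type} [Add R] (a b : V) (θ : V → R) (j : {i : V // i ≠ a}) : R :=
  if (j : V) = b then θ a + θ b else θ (j : V)

/-- The graph of the tree-assignment recursion: `TreeAssign tl hd x xs W S θ T` means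
that the recursion, applied to the restriction of `(x, xs)` to the subquiver with vertex
set `W` and edge set `S` and with stability parameter `θ` (and the linear order induced
from `E`), produces the spanning tree `T`. -/
inductive TreeAssign {V E k : Type} [Fintype V] [LinearOrder E] [Zero k]
    (tl hd : E → V) (x xs : E → k) :
    Finset V → Finset E → (V → ℝ) → Finset E → Prop
  | base (W : Finset V) (S : Finset E) (θ : V → ℝ) (hW : W.card = 1) :
      TreeAssign tl hd x xs W S θ ∅
  | delete (W : Finset V) (S : Finset E) (θ : V → ℝ) (e : E)
      (he : e ∈ S) (hloop : tl e ≠ hd e)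
      (hsmall : ∀ f ∈ S, tl f ≠ hd f → e ≤ f)
      (hstab : StableSub tl hd θ x xs W ↑(S.erase e))
      (T : Finset E) (ih : TreeAssign tl hd x xs W (S.erase e) θ T) :
      TreeAssign tl hd x xs W S θ T
  | contract (W : Finset V) (S : Finset E) (θ : V → ℝ) (e : E) (a b : V)
      (he : e ∈ S) (hloop : tl e ≠ hd e)
      (hsmall : ∀ f ∈ S, tl f ≠ hd f → e ≤ f)
      (hab : (a = tl e ∧ b = hd e) ∨ (a = hd e ∧ b = tl e))
      (J₁ : Finset V)
      (hJ₁ : DestabSub tl hd θ x xs W ↑(S.erase e) J₁)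
      (hall : ∀ J, DestabSub tl hd θ x xs W ↑(S.erase e) J → a ∈ J ∧ b ∉ J)
      (hmin : ∀ J, DestabSub tl hd θ x xs W ↑(S.erase e) J →
        ∑ i ∈ J₁, θ i ≤ ∑ i ∈ J, θ i)
      (T₁ T₂ : Finset E)
      (ih₁ : TreeAssign tl hd x xs J₁ (S.filter fun f => tl f ∈ J₁ ∧ hd f ∈ J₁)
          (fun i => if i = a then θ i - ∑ j ∈ J₁, θ j
            else if i = b then θ i + ∑ j ∈ J₁, θ j else θ i) T₁)
      (ih₂ : TreeAssign tl hd x xs (W \ J₁)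
          (S.filter fun f => tl f ∈ W \ J₁ ∧ hd f ∈ W \ J₁)
          (fun i => if i = a then θ i - ∑ j ∈ J₁, θ j
            else if i = b then θ i + ∑ j ∈ J₁, θ j else θ i) T₂) :
      TreeAssign tl hd x xs W S θ (insert e (T₁ ∪ T₂))

/-- Points of the cell `M_T`: `θ`-stable pairs satisfying the moment map equations whose
assigned spanning tree is `T`. -/
def CellPt {V E k : Type} [Fintype V] [Fintype E] [LinearOrder E] [Field k]
    (tl hd : E → V) (lam : V → k) (θ : V → ℝ) (T : Finset E) : Type :=
  {p : (E → k) × (E → k) //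
    StableSub tl hd θ p.1 p.2 Finset.univ Set.univ ∧
    MomentMap tl hd lam p.1 p.2 ∧
    TreeAssign tl hd p.1 p.2 Finset.univ Finset.univ θ T}

/-- The cell `M_T` of the Nakajima orbit set: `(kˣ)^V`-orbits of points. -/
def Cell {V E k : Type} [Fintype V] [Fintype E] [LinearOrder E] [Field k]
    (tl hd : E → V) (lam : V → k) (θ : V → ℝ) (T : Finset E) : Type :=
  Quot fun p q : CellPt tl hd lam θ T => GaugeEquiv tl hd p.1.1 p.1.2 q.1.1 q.1.2


/-!
Induction along the tree-assignment recursion. A deletion step changes nothing, since the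
largest non-loop edge `e` cannot be deleted while two vertices remain. In a contraction step
the smallest non-loop edge `e₀` glues the trees of the minimal destabilising set `J₁` and of
its complement. If both endpoints of `e` lie on one side, the cycle of `e`, its smallest edge
`a`, and the sign deciding the `θ`-orientation of `a` are those of that side with its shifted
parameter `θ'`, and we induct. Otherwise `e` crosses `J₁`, so `e₀` lies on the cycle of `e`
and `a = e₀`; the side of the cut of `e₀` with negative `θ`-sum is `J₁`, so the `a`-induced
orientation agrees with that of `e` exactly when `e` enters `J₁`, and closedness of `J₁`
(imposed on every edge but `e₀`) kills `xs e` in that case and `x e` otherwise.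
-/

section Graph

variable {V E : Type} {tl hd : E → V}

theorem joinedRel.refl (D : Set E) (u : V) : joinedRel tl hd D u u :=
  Relation.EqvGen.refl u

theorem joinedRel.symm {D : Set E} {u v : V} (h : joinedRel tl hd D u v) :
    joinedRel tl hd D v u :=
  Relation.EqvGen.symm u v h

theorem joinedRel.trans {D : Set E} {u v w : V} (h : joinedRel tl hd D u v)
    (h' : joinedRel tl hd D v w) : joinedRel tl hd D u w :=
  Relation.EqvGen.trans u v w h h'

theorem joinedRel.mono {D D' : Set E} (hD : D ⊆ D') {u v : V} (h : joinedRel tl hd D u v) :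
    joinedRel tl hd D' u v :=
  Relation.EqvGen.mono (fun _ _ ⟨d, hdD, ho⟩ => ⟨d, hD hdD, ho⟩) _ _ h

theorem joinedRel_of_mem {D : Set E} {d : E} (hdD : d ∈ D) : joinedRel tl hd D (tl d) (hd d) :=
  Relation.EqvGen.rel _ _ ⟨d, hdD, Or.inl ⟨rfl, rfl⟩⟩

theorem joinedRel.iff_of_forall_iff {P : V → Prop} {D : Set E}
    (hP : ∀ d ∈ D, (P (tl d) ↔ P (hd d))) {u v : V} (h : joinedRel tl hd D u v) :
    P u ↔ P v := by
  induction h with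
  | rel _ _ hr =>
    obtain ⟨d, hdD, ⟨rfl, rfl⟩ | ⟨rfl, rfl⟩⟩ := hr
    exacts [hP d hdD, (hP d hdD).symm]
  | refl => exact Iff.rfl
  | symm _ _ _ ih => exact ih.symm
  | trans _ _ _ _ _ ih₁ ih₂ => exact ih₁.trans ih₂

def IsEdgeBetween (tl hd : E → V) (e : E) (p q : V) : Prop :=
  (p = tl e ∧ q = hd e) ∨ (p = hd e ∧ q = tl e)

theorem IsEdgeBetween.symm {e : E} {p q : V} (h : IsEdgeBetween tl hd e p q) :
    IsEdgeBetween tl hd e q p :=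
  (Or.symm h).imp And.symm And.symm

theorem joinedRel_of_isEdgeBetween {D : Set E} {e : E} {p q : V} (heD : e ∈ D)
    (h : IsEdgeBetween tl hd e p q) : joinedRel tl hd D p q := by
  rcases h with ⟨rfl, rfl⟩ | ⟨rfl, rfl⟩
  exacts [joinedRel_of_mem heD, (joinedRel_of_mem heD).symm]

def EdgesIn (tl hd : E → V) (D : Finset E) (A : Finset V) : Prop :=
  ∀ d ∈ D, tl d ∈ A ∧ hd d ∈ A

def Spans (tl hd : E → V) (D : Finset E) (A : Finset V) : Prop :=
  ∀ u ∈ A, ∀ w ∈ A, joinedRel tl hd ↑D u w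

theorem EdgesIn.mono {D D' : Finset E} {A : Finset V} (h : EdgesIn tl hd D A) (hD : D' ⊆ D) :
    EdgesIn tl hd D' A :=
  fun d hd' => h d (hD hd')

theorem IsEdgeBetween.notMem_of_edgesIn {D : Finset E} {A : Finset V} {e : E} {p q : V}
    (he : IsEdgeBetween tl hd e p q) (hD : EdgesIn tl hd D A) (hq : q ∉ A) : e ∉ D := by
  intro heD
  rcases he with ⟨-, rfl⟩ | ⟨-, rfl⟩
  exacts [hq (hD e heD).2, hq (hD e heD).1]

theorem mem_component [Fintype V] {D : Finset E} {v w : V} :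
    w ∈ component tl hd D v ↔ joinedRel tl hd ↑D v w := by
  simp [component]

theorem EdgesIn.component_subset [Fintype V] {D : Finset E} {A : Finset V} {v : V}
    (hD : EdgesIn tl hd D A) (hv : v ∈ A) : component tl hd D v ⊆ A := fun _ hw =>
  ((mem_component.1 hw).iff_of_forall_iff (P := (· ∈ A))
    fun d hdD => iff_of_true (hD d hdD).1 (hD d hdD).2).1 hv

end Graph

section Gluing

variable {V E : Type} {tl hd : E → V} {A B : Finset V} {T_A T_B : Finset E} {e₀ : E} {p q : V}

structure IsGluing (tl hd : E → V) (A B : Finset V) (T_A T_B : Finset E) (e₀ : E) (p q : V) :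
    Prop where
  disjoint : Disjoint A B
  edgesIn_left : EdgesIn tl hd T_A A
  edgesIn_right : EdgesIn tl hd T_B B
  spans_left : Spans tl hd T_A A
  spans_right : Spans tl hd T_B B
  edge : IsEdgeBetween tl hd e₀ p q
  left_mem : p ∈ A
  right_mem : q ∈ B

namespace IsGluing

theorem symm (g : IsGluing tl hd A B T_A T_B e₀ p q) : IsGluing tl hd B A T_B T_A e₀ q p :=
  ⟨g.disjoint.symm, g.edgesIn_right, g.edgesIn_left, g.spans_right, g.spans_left, g.edge.symm,
    g.right_mem, g.left_mem⟩

theorem spans [DecidableEq E] (g : IsGluing tl hd A B T_A T_B e₀ p q) :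
    Spans tl hd (insert e₀ (T_A ∪ T_B)) (A ∪ B) := by
  have to_p : ∀ u ∈ A ∪ B, joinedRel tl hd ↑(insert e₀ (T_A ∪ T_B)) u p := by
    intro u hu
    rcases mem_union.1 hu with hu | hu
    · exact (g.spans_left u hu p g.left_mem).mono (by simp +contextual [Set.subset_def])
    · exact ((g.spans_right u hu q g.right_mem).mono (by simp +contextual [Set.subset_def])).trans
        (joinedRel_of_isEdgeBetween (by simp) g.edge.symm)
  exact fun u hu w hw => (to_p u hu).trans (to_p w hw).symm

theorem notMem_right_of_mem_left (g : IsGluing tl hd A B T_A T_B e₀ p q) {f : E}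
    (hf : f ∈ T_A) : f ∉ T_B := fun hf' =>
  disjoint_left.1 g.disjoint (g.edgesIn_left f hf).1 (g.edgesIn_right f hf').1

theorem edge_notMem_union [DecidableEq E] (g : IsGluing tl hd A B T_A T_B e₀ p q) :
    e₀ ∉ T_A ∪ T_B := by
  rw [mem_union, not_or]
  exact ⟨g.edge.notMem_of_edgesIn g.edgesIn_left (disjoint_right.1 g.disjoint g.right_mem),
    g.edge.symm.notMem_of_edgesIn g.edgesIn_right (disjoint_left.1 g.disjoint g.left_mem)⟩

theorem erase_edge [DecidableEq E] (g : IsGluing tl hd A B T_A T_B e₀ p q) :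
    (insert e₀ (T_A ∪ T_B)).erase e₀ = T_A ∪ T_B :=
  erase_insert g.edge_notMem_union

theorem erase_of_mem_left [DecidableEq E] (g : IsGluing tl hd A B T_A T_B e₀ p q) {f : E}
    (hf : f ∈ T_A) : (insert e₀ (T_A ∪ T_B)).erase f = insert e₀ (T_A.erase f ∪ T_B) := by
  have hfe₀ : e₀ ≠ f := fun h => g.edge_notMem_union (h ▸ mem_union_left _ hf)
  rw [erase_insert_of_ne hfe₀, erase_union_distrib,
    erase_eq_of_notMem (g.notMem_right_of_mem_left hf)]

theorem mem_iff_of_mem_union [DecidableEq E] (g : IsGluing tl hd A B T_A T_B e₀ p q) :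
    ∀ d ∈ (↑(T_A ∪ T_B) : Set E), (tl d ∈ A ↔ hd d ∈ A) := by
  intro d hd'
  rcases mem_union.1 hd' with hd' | hd'
  · exact iff_of_true (g.edgesIn_left d hd').1 (g.edgesIn_left d hd').2
  · exact iff_of_false (disjoint_right.1 g.disjoint (g.edgesIn_right d hd').1)
      (disjoint_right.1 g.disjoint (g.edgesIn_right d hd').2)

theorem joinedRel_cases [DecidableEq E] (g : IsGluing tl hd A B T_A T_B e₀ p q)
    {X : Finset E} (hX : X ⊆ T_A) {v u : V} (hv : v ∈ A)
    (h : joinedRel tl hd ↑(insert e₀ (X ∪ T_B)) v u) :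
    (u ∈ A ∧ joinedRel tl hd ↑X v u) ∨ (u ∈ B ∧ joinedRel tl hd ↑X v p) := by
  let P : V → Prop := fun w =>
    (w ∈ A ∧ joinedRel tl hd ↑X v w) ∨ (w ∈ B ∧ joinedRel tl hd ↑X v p)
  have hPA : ∀ w ∈ A, (P w ↔ joinedRel tl hd ↑X v w) := fun w hw => by
    simp [P, hw, disjoint_left.1 g.disjoint hw]
  have hPB : ∀ w ∈ B, (P w ↔ joinedRel tl hd ↑X v p) := fun w hw => by
    simp [P, hw, disjoint_right.1 g.disjoint hw]
  refine (h.iff_of_forall_iff (P := P) ?_).1 (Or.inl ⟨hv, joinedRel.refl _ _⟩)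
  intro d hdD
  simp only [coe_insert, coe_union, Set.mem_insert_iff, Set.mem_union, mem_coe] at hdD
  rcases hdD with rfl | hdX | hdY
  · rcases g.edge with ⟨hp, hq⟩ | ⟨hp, hq⟩ <;>
      rw [← hp, ← hq, hPA _ g.left_mem, hPB _ g.right_mem]
  · obtain ⟨htl, hhd⟩ := g.edgesIn_left d (hX hdX)
    rw [hPA _ htl, hPA _ hhd]
    exact ⟨fun h' => h'.trans (joinedRel_of_mem hdX),
      fun h' => h'.trans (joinedRel_of_mem hdX).symm⟩
  · rw [hPB _ (g.edgesIn_right d hdY).1, hPB _ (g.edgesIn_right d hdY).2]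

theorem component_erase [Fintype V] [DecidableEq E] (g : IsGluing tl hd A B T_A T_B e₀ p q)
    {f : E} (hf : f ∈ T_A) {v : V} (hv : v ∈ A) :
    component tl hd ((insert e₀ (T_A ∪ T_B)).erase f) v =
      component tl hd (T_A.erase f) v ∪
        if p ∈ component tl hd (T_A.erase f) v then B else ∅ := by
  rw [g.erase_of_mem_left hf]
  ext u
  rw [mem_union, mem_component, mem_component]
  constructor
  · intro h
    rcases g.joinedRel_cases (erase_subset f T_A) hv h with ⟨-, h⟩ | ⟨hu, h⟩
    · exact Or.inl h
    · rw [if_pos (mem_component.2 h)]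
      exact Or.inr hu
  · rintro (h | h)
    · exact h.mono (by simp +contextual [Set.subset_def])
    · split_ifs at h with hp
      · exact ((mem_component.1 hp).mono (by simp +contextual [Set.subset_def])).trans
          ((joinedRel_of_isEdgeBetween (by simp) g.edge).trans
            ((g.spans_right q g.right_mem u h).mono (by simp +contextual [Set.subset_def])))
      · simp at h

theorem component_union [Fintype V] [DecidableEq E] (g : IsGluing tl hd A B T_A T_B e₀ p q)
    {v : V} (hv : v ∈ A) : component tl hd (T_A ∪ T_B) v = A := by
  refine Subset.antisymm (fun w hw => ?_) (fun w hw => ?_)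
  · exact ((mem_component.1 hw).iff_of_forall_iff g.mem_iff_of_mem_union).1 hv
  · exact mem_component.2 ((g.spans_left v hv w hw).mono (coe_subset.2 subset_union_left))

end IsGluing

end Gluing

section Weights

variable {V : Type} {A W : Finset V} {p : V} {θ θ' : V → ℝ}

def GenericOn (W : Finset V) (θ : V → ℝ) : Prop :=
  ∀ J ⊆ W, J.Nonempty → J ≠ W → ∑ i ∈ J, θ i ≠ 0

/-- The parameter passed by the recursion to a piece `A` attached at `p`. -/
def IsShiftOn (A : Finset V) (p : V) (θ θ' : V → ℝ) : Prop :=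
  ∀ J ⊆ A, ∑ i ∈ J, θ' i = ∑ i ∈ J, θ i - if p ∈ J then ∑ i ∈ A, θ i else 0

theorem IsShiftOn.sum_eq_zero (h : IsShiftOn A p θ θ') (hp : p ∈ A) :
    ∑ i ∈ A, θ' i = 0 := by
  rw [h A subset_rfl, if_pos hp, sub_self]

theorem IsShiftOn.genericOn (h : IsShiftOn A p θ θ') (hAW : A ⊆ W) (hAW' : A ≠ W)
    (hgen : GenericOn W θ) : GenericOn A θ' := by
  intro J hJA hJ hJA'
  rw [h J hJA]
  split_ifs
  · have hdiff : ∑ i ∈ A \ J, θ i + ∑ i ∈ J, θ i = ∑ i ∈ A, θ i := sum_sdiff hJA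
    have hcompl := hgen (A \ J) (sdiff_subset.trans hAW)
      (sdiff_nonempty.2 fun h' => hJA' (hJA.antisymm h'))
      fun h' => hAW' (hAW.antisymm (h' ▸ sdiff_subset))
    intro h0
    exact hcompl (by linarith)
  · rw [sub_zero]
    exact hgen J (hJA.trans hAW) hJ fun h' => hAW' (hAW.antisymm (h' ▸ hJA))

def moveWeight (a b : V) (β : ℝ) (θ : V → ℝ) : V → ℝ :=
  fun i => if i = a then θ i - β else if i = b then θ i + β else θ i

theorem sum_moveWeight {a b : V} (hab : a ≠ b) (β : ℝ) (θ : V → ℝ) (J : Finset V) :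
    ∑ i ∈ J, moveWeight a b β θ i =
      ∑ i ∈ J, θ i - (if a ∈ J then β else 0) + (if b ∈ J then β else 0) := by
  have hpt : ∀ i, moveWeight a b β θ i =
      θ i - (if a = i then β else 0) + (if b = i then β else 0) := by
    intro i
    rcases eq_or_ne i a with rfl | hia
    · simp [moveWeight, hab.symm]
    rcases eq_or_ne i b with rfl | hib
    · simp [moveWeight, hia, hia.symm]
    simp [moveWeight, hia, hib, hia.symm, hib.symm]
  simp only [hpt, sum_add_distrib, sum_sub_distrib, sum_ite_eq]

theorem isShiftOn_moveWeight_left {a b : V} (hab : a ≠ b) (hb : b ∉ A) :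
    IsShiftOn A a θ (moveWeight a b (∑ i ∈ A, θ i) θ) := fun J hJ => by
  rw [sum_moveWeight hab, if_neg fun h => hb (hJ h), add_zero]

theorem isShiftOn_moveWeight_right {a b : V} {β : ℝ} (hab : a ≠ b) (ha : a ∉ A)
    (hβ : β + ∑ i ∈ A, θ i = 0) : IsShiftOn A b θ (moveWeight a b β θ) := fun J hJ => by
  rw [sum_moveWeight hab, if_neg fun h => ha (hJ h), sub_zero]
  split_ifs <;> linarith

end Weights

section Cycles

variable {V E : Type} {tl hd : E → V} {A B : Finset V} {T_A T_B : Finset E} {e₀ e a : E}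
  {p q : V}

def IsMaxNonLoop [LinearOrder E] (tl hd : E → V) (S : Finset E) (e : E) : Prop :=
  e ∈ S ∧ tl e ≠ hd e ∧ ∀ f ∈ S, tl f ≠ hd f → f ≤ e

/-- An edge `f ∈ T` lies on the fundamental cycle `C(T, e)` iff `T ∖ {f}` separates the
endpoints of `e`. -/
def IsMinCycleEdge [LinearOrder E] (tl hd : E → V) (T : Finset E) (e a : E) : Prop :=
  a ∈ T ∧ ¬ joinedRel tl hd ↑(T.erase a) (tl e) (hd e) ∧
    ∀ f ∈ T, ¬ joinedRel tl hd ↑(T.erase f) (tl e) (hd e) → a ≤ f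

/-- With `K` the component of `hd a` in `T ∖ {a}`, the edge `a` is `θ`-forward iff
`0 < ∑ K θ`; traversed along `a`, the cycle enters `K` through `a` iff `a` is forward, and
crosses back through `e`. -/
def InducedOrientationAgrees [Fintype V] [DecidableEq E] (tl hd : E → V) (θ : V → ℝ)
    (T : Finset E) (a e : E) : Prop :=
  ((0 < ∑ j ∈ component tl hd (T.erase a) (hd a), θ j) ∧
      tl e ∈ component tl hd (T.erase a) (hd a)) ∨
    ((¬ (0 < ∑ j ∈ component tl hd (T.erase a) (hd a), θ j)) ∧
      hd e ∈ component tl hd (T.erase a) (hd a))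

namespace IsGluing

theorem isMinCycleEdge [LinearOrder E] (g : IsGluing tl hd A B T_A T_B e₀ p q)
    (htl : tl e ∈ A) (hhd : hd e ∈ A)
    (ha : IsMinCycleEdge tl hd (insert e₀ (T_A ∪ T_B)) e a) : IsMinCycleEdge tl hd T_A e a := by
  obtain ⟨-, hcut, hmin⟩ := ha
  have haA : a ∈ T_A := by
    by_contra haA
    refine hcut ((g.spans_left _ htl _ hhd).mono (coe_subset.2 fun d hd' => ?_))
    exact mem_erase.2 ⟨ne_of_mem_of_not_mem hd' haA, mem_insert_of_mem (mem_union_left _ hd')⟩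
  refine ⟨haA, fun h => hcut (h.mono (coe_subset.2 ?_)), fun f hf hcutf => ?_⟩
  · exact erase_subset_erase a (subset_union_left.trans (subset_insert _ _))
  · refine hmin f (mem_insert_of_mem (mem_union_left _ hf)) fun h => hcutf ?_
    rw [g.erase_of_mem_left hf] at h
    rcases g.joinedRel_cases (erase_subset f T_A) htl h with ⟨-, h⟩ | ⟨hB, -⟩
    · exact h
    · exact absurd hhd (disjoint_right.1 g.disjoint hB)

theorem eq_of_isMinCycleEdge [LinearOrder E] (g : IsGluing tl hd A B T_A T_B e₀ p q)
    (he : (tl e ∈ A ∧ hd e ∈ B) ∨ (tl e ∈ B ∧ hd e ∈ A))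
    (ha : IsMinCycleEdge tl hd (insert e₀ (T_A ∪ T_B)) e a) (hle : e₀ ≤ a) : a = e₀ := by
  refine le_antisymm (ha.2.2 e₀ (mem_insert_self _ _) fun h => ?_) hle
  rw [g.erase_edge] at h
  have hiff := h.iff_of_forall_iff g.mem_iff_of_mem_union
  rcases he with ⟨h1, h2⟩ | ⟨h1, h2⟩
  · exact disjoint_right.1 g.disjoint h2 (hiff.1 h1)
  · exact disjoint_right.1 g.disjoint h1 (hiff.2 h2)

theorem inducedOrientationAgrees_iff [Fintype V] [DecidableEq E]
    (g : IsGluing tl hd A B T_A T_B e₀ p q) {θ θ' : V → ℝ}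
    (hsum : ∑ i ∈ A, θ i + ∑ i ∈ B, θ i = 0) (hshift : IsShiftOn A p θ θ')
    (haT : a ∈ T_A) (htl : tl e ∈ A) (hhd : hd e ∈ A) :
    InducedOrientationAgrees tl hd θ (insert e₀ (T_A ∪ T_B)) a e ↔
      InducedOrientationAgrees tl hd θ' T_A a e := by
  have hK := g.component_erase haT (g.edgesIn_left a haT).2
  set K := component tl hd (T_A.erase a) (hd a)
  have hKA : K ⊆ A :=
    (g.edgesIn_left.mono (erase_subset a T_A)).component_subset (g.edgesIn_left a haT).2
  have hsumK : ∑ i ∈ K ∪ (if p ∈ K then B else ∅), θ i = ∑ i ∈ K, θ' i := by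
    rw [hshift K hKA]
    split_ifs
    · rw [sum_union (disjoint_of_subset_left hKA g.disjoint)]
      linarith
    · simp
  have hmem : ∀ u ∈ A, (u ∈ K ∪ (if p ∈ K then B else ∅) ↔ u ∈ K) := fun u hu => by
    split_ifs <;> simp [disjoint_left.1 g.disjoint hu]
  unfold InducedOrientationAgrees
  rw [hK, hsumK, hmem _ htl, hmem _ hhd]

theorem inducedOrientationAgrees_edge_iff [Fintype V] [DecidableEq E]
    (g : IsGluing tl hd A B T_A T_B e₀ p q) {θ : V → ℝ}
    (hsum : ∑ i ∈ A, θ i + ∑ i ∈ B, θ i = 0) (hneg : ∑ i ∈ A, θ i < 0)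
    (he : (tl e ∈ A ∧ hd e ∈ B) ∨ (tl e ∈ B ∧ hd e ∈ A)) :
    InducedOrientationAgrees tl hd θ (insert e₀ (T_A ∪ T_B)) e₀ e ↔ hd e ∈ A := by
  unfold InducedOrientationAgrees
  rw [g.erase_edge]
  rcases g.edge with ⟨-, hq⟩ | ⟨hp, -⟩
  · have htlB : tl e ∈ B ↔ hd e ∈ A := by
      rcases he with ⟨h1, h2⟩ | ⟨h1, h2⟩
      · exact iff_of_false (disjoint_left.1 g.disjoint h1) (disjoint_right.1 g.disjoint h2)
      · exact iff_of_true h1 h2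
    have hpos : 0 < ∑ i ∈ B, θ i := by linarith
    rw [← hq, union_comm, g.symm.component_union g.right_mem, htlB]
    simp [hpos]
  · rw [← hp, g.component_union g.left_mem]
    simp [hneg.le]

end IsGluing

end Cycles

section TreeAssignment

variable {V E k : Type} [Fintype V] [LinearOrder E] [Zero k] {tl hd : E → V} {x xs : E → k}
  {W : Finset V} {S T : Finset E} {θ : V → ℝ}

theorem TreeAssign.subset (h : TreeAssign tl hd x xs W S θ T) : T ⊆ S := by
  induction h with
  | base => exact empty_subset _
  | delete _ _ _ _ _ _ _ _ _ _ ih => exact ih.trans (erase_subset _ _)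
  | contract _ _ _ _ _ _ he _ _ _ _ _ _ _ _ _ _ _ ih₁ ih₂ =>
    exact insert_subset he
      (union_subset (ih₁.trans (filter_subset _ _)) (ih₂.trans (filter_subset _ _)))

theorem TreeAssign.tl_ne_hd (h : TreeAssign tl hd x xs W S θ T) : ∀ f ∈ T, tl f ≠ hd f := by
  induction h with
  | base => simp
  | delete _ _ _ _ _ _ _ _ _ _ ih => exact ih
  | contract _ _ _ _ _ _ _ hloop _ _ _ _ _ _ _ _ _ _ ih₁ ih₂ =>
    intro f hf
    rcases mem_insert.1 hf with rfl | hf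
    · exact hloop
    · exact (mem_union.1 hf).elim (ih₁ f) (ih₂ f)

theorem TreeAssign.card_eq_one_of_forall_loop (h : TreeAssign tl hd x xs W S θ T)
    (hS : ∀ f ∈ S, tl f = hd f) : W.card = 1 := by
  cases h with
  | base _ _ _ hW => exact hW
  | delete _ _ _ f hf hloop => exact absurd (hS f hf) hloop
  | contract _ _ _ f _ _ hf hloop => exact absurd (hS f hf) hloop

theorem isGluing_of_contract {J : Finset V} {e₀ : E} {a b : V} {θ₁ θ₂ : V → ℝ}
    {T₁ T₂ : Finset E} (hS : EdgesIn tl hd S W) (he₀ : e₀ ∈ S)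
    (hab : IsEdgeBetween tl hd e₀ a b) (ha : a ∈ J) (hb : b ∉ J)
    (h₁ : TreeAssign tl hd x xs J (S.filter fun f => tl f ∈ J ∧ hd f ∈ J) θ₁ T₁)
    (h₂ : TreeAssign tl hd x xs (W \ J)
      (S.filter fun f => tl f ∈ W \ J ∧ hd f ∈ W \ J) θ₂ T₂)
    (hspan₁ : Spans tl hd T₁ J) (hspan₂ : Spans tl hd T₂ (W \ J)) :
    IsGluing tl hd J (W \ J) T₁ T₂ e₀ a b := by
  have hbW : b ∈ W := by
    rcases hab with ⟨-, rfl⟩ | ⟨-, rfl⟩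
    exacts [(hS e₀ he₀).2, (hS e₀ he₀).1]
  exact ⟨disjoint_sdiff, fun d hd' => (mem_filter.1 (h₁.subset hd')).2,
    fun d hd' => (mem_filter.1 (h₂.subset hd')).2, hspan₁, hspan₂, hab, ha,
    mem_sdiff.2 ⟨hbW, hb⟩⟩

theorem TreeAssign.spans (h : TreeAssign tl hd x xs W S θ T) :
    EdgesIn tl hd S W → Spans tl hd T W := by
  induction h with
  | base W _ _ hW =>
    intro _ u hu w hw
    rw [card_le_one.1 hW.le u hu w hw]
    exact joinedRel.refl _ _
  | delete _ _ _ _ _ _ _ _ _ _ ih => exact fun hS => ih (hS.mono (erase_subset _ _))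
  | contract W S _ _ _ _ he₀ _ _ hab J₁ hJ₁ hall _ _ _ h₁ h₂ ih₁ ih₂ =>
    intro hS
    have g := isGluing_of_contract hS he₀ hab (hall J₁ hJ₁).1 (hall J₁ hJ₁).2 h₁ h₂
      (ih₁ fun f hf => (mem_filter.1 hf).2) (ih₂ fun f hf => (mem_filter.1 hf).2)
    rw [← union_sdiff_of_subset hJ₁.1]
    exact g.spans

end TreeAssignment

section Vanishing

variable {V E k : Type} [Fintype V] [LinearOrder E] [Zero k] {tl hd : E → V} {x xs : E → k}
  {A B W : Finset V} {S T T_A T_B : Finset E} {θ : V → ℝ} {e₀ e a : E} {p q : V}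

def OrientedVanishing (tl hd : E → V) (x xs : E → k) (θ : V → ℝ) (T : Finset E) (a e : E) :
    Prop :=
  (InducedOrientationAgrees tl hd θ T a e → xs e = 0) ∧
    (¬ InducedOrientationAgrees tl hd θ T a e → x e = 0)

def MaxEdgeVanishes (tl hd : E → V) (x xs : E → k) (θ : V → ℝ) (S T : Finset E) : Prop :=
  ∀ e a, IsMaxNonLoop tl hd S e → e ∉ T → IsMinCycleEdge tl hd T e a →
    OrientedVanishing tl hd x xs θ T a e

theorem IsGluing.orientedVanishing_of_mem (g : IsGluing tl hd A B T_A T_B e₀ p q)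
    {θ' : V → ℝ} (hsum : ∑ i ∈ A, θ i + ∑ i ∈ B, θ i = 0)
    (hshift : IsShiftOn A p θ θ')
    (ih : MaxEdgeVanishes tl hd x xs θ' (S.filter fun f => tl f ∈ A ∧ hd f ∈ A) T_A)
    (he : IsMaxNonLoop tl hd S e) (heT : e ∉ insert e₀ (T_A ∪ T_B))
    (ha : IsMinCycleEdge tl hd (insert e₀ (T_A ∪ T_B)) e a)
    (htl : tl e ∈ A) (hhd : hd e ∈ A) :
    OrientedVanishing tl hd x xs θ (insert e₀ (T_A ∪ T_B)) a e := by
  have ha' := g.isMinCycleEdge htl hhd ha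
  have he' : IsMaxNonLoop tl hd (S.filter fun f => tl f ∈ A ∧ hd f ∈ A) e :=
    ⟨mem_filter.2 ⟨he.1, htl, hhd⟩, he.2.1, fun f hf => he.2.2 f (mem_filter.1 hf).1⟩
  have heT' : e ∉ T_A := fun h => heT (mem_insert_of_mem (mem_union_left _ h))
  unfold OrientedVanishing
  rw [g.inducedOrientationAgrees_iff hsum hshift ha'.1 htl hhd]
  exact ih e a he' heT' ha'

theorem IsGluing.orientedVanishing_of_crossing (g : IsGluing tl hd A B T_A T_B e₀ p q)
    (hsum : ∑ i ∈ A, θ i + ∑ i ∈ B, θ i = 0) (hneg : ∑ i ∈ A, θ i < 0)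
    (hcl : ClosedOn tl hd x xs ↑(S.erase e₀) A) (heS : e ∈ S)
    (heT : e ∉ insert e₀ (T_A ∪ T_B))
    (he : (tl e ∈ A ∧ hd e ∈ B) ∨ (tl e ∈ B ∧ hd e ∈ A)) :
    OrientedVanishing tl hd x xs θ (insert e₀ (T_A ∪ T_B)) e₀ e := by
  have hee₀ : e ≠ e₀ := fun h => heT (h ▸ mem_insert_self _ _)
  obtain ⟨hx, hxs⟩ := hcl e (mem_erase.2 ⟨hee₀, heS⟩)
  have hAB := disjoint_left.1 g.disjoint
  rw [OrientedVanishing, g.inducedOrientationAgrees_edge_iff hsum hneg he]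
  constructor
  · intro hhd
    by_contra h
    rcases he with ⟨-, h2⟩ | ⟨h1, -⟩
    exacts [hAB hhd h2, hAB (hxs h hhd) h1]
  · intro hhd
    by_contra h
    rcases he with ⟨h1, h2⟩ | ⟨-, h2⟩
    exacts [hAB (hx h h1) h2, hhd h2]

theorem IsGluing.maxEdgeVanishes (g : IsGluing tl hd A B T_A T_B e₀ p q) {θ' : V → ℝ}
    (hS : EdgesIn tl hd S (A ∪ B)) (hsum : ∑ i ∈ A, θ i + ∑ i ∈ B, θ i = 0)
    (hneg : ∑ i ∈ A, θ i < 0) (hshift_A : IsShiftOn A p θ θ') (hshift_B : IsShiftOn B q θ θ')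
    (hcl : ClosedOn tl hd x xs ↑(S.erase e₀) A) (hsmall : ∀ f ∈ insert e₀ (T_A ∪ T_B), e₀ ≤ f)
    (ih_A : MaxEdgeVanishes tl hd x xs θ' (S.filter fun f => tl f ∈ A ∧ hd f ∈ A) T_A)
    (ih_B : MaxEdgeVanishes tl hd x xs θ' (S.filter fun f => tl f ∈ B ∧ hd f ∈ B) T_B) :
    MaxEdgeVanishes tl hd x xs θ S (insert e₀ (T_A ∪ T_B)) := by
  intro e a he heT ha
  have crossing : (tl e ∈ A ∧ hd e ∈ B) ∨ (tl e ∈ B ∧ hd e ∈ A) →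
      OrientedVanishing tl hd x xs θ (insert e₀ (T_A ∪ T_B)) a e := fun hcross => by
    obtain rfl := g.eq_of_isMinCycleEdge hcross ha (hsmall a ha.1)
    exact g.orientedVanishing_of_crossing hsum hneg hcl he.1 heT hcross
  rcases mem_union.1 (hS e he.1).1 with h1 | h1 <;>
    rcases mem_union.1 (hS e he.1).2 with h2 | h2
  · exact g.orientedVanishing_of_mem hsum hshift_A ih_A he heT ha h1 h2
  · exact crossing (Or.inl ⟨h1, h2⟩)
  · exact crossing (Or.inr ⟨h1, h2⟩)
  · rw [union_comm] at heT ha ⊢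
    exact g.symm.orientedVanishing_of_mem (by rwa [add_comm]) hshift_B ih_B he heT ha h1 h2

theorem TreeAssign.maxEdgeVanishes (h : TreeAssign tl hd x xs W S θ T) :
    EdgesIn tl hd S W → ∑ i ∈ W, θ i = 0 → GenericOn W θ →
      MaxEdgeVanishes tl hd x xs θ S T := by
  induction h with
  | base => exact fun _ _ _ e a _ _ ha => absurd ha.1 (notMem_empty a)
  | delete _ S _ f _ _ hsmall _ _ h ih =>
    intro hS hsum hgen e a he heT ha
    obtain rfl | hef := eq_or_ne e f
    · have hloops : ∀ g ∈ S.erase e, tl g = hd g := fun g hg => by_contra fun hg' =>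
        (mem_erase.1 hg).1 <| le_antisymm (he.2.2 g (mem_of_mem_erase hg) hg')
          (hsmall g (mem_of_mem_erase hg) hg')
      exact absurd (card_le_one.1 (h.card_eq_one_of_forall_loop hloops).le _ (hS e he.1).1 _
        (hS e he.1).2) he.2.1
    · exact ih (hS.mono (erase_subset _ _)) hsum hgen e a
        ⟨mem_erase.2 ⟨hef, he.1⟩, he.2.1, fun g hg => he.2.2 g (mem_of_mem_erase hg)⟩ heT ha
  | contract W S θ e₀ a₀ b₀ he₀ hloop₀ hsmall₀ hab J₁ hJ₁ hall hmin T₁ T₂ h₁ h₂ ih₁ ih₂ =>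
    intro hS hsum hgen
    have hT := TreeAssign.contract W S θ e₀ a₀ b₀ he₀ hloop₀ hsmall₀ hab J₁ hJ₁ hall hmin
      T₁ T₂ h₁ h₂
    obtain ⟨ha₀, hb₀⟩ := hall J₁ hJ₁
    obtain ⟨hJW, hJne, hJW', hJcl, hJle⟩ := hJ₁
    have hS₁ : EdgesIn tl hd (S.filter fun f => tl f ∈ J₁ ∧ hd f ∈ J₁) J₁ :=
      fun f hf => (mem_filter.1 hf).2
    have hS₂ : EdgesIn tl hd (S.filter fun f => tl f ∈ W \ J₁ ∧ hd f ∈ W \ J₁) (W \ J₁) :=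
      fun f hf => (mem_filter.1 hf).2
    have g := isGluing_of_contract hS he₀ hab ha₀ hb₀ h₁ h₂ (h₁.spans hS₁) (h₂.spans hS₂)
    have ha₀b₀ : a₀ ≠ b₀ := fun h => hb₀ (h ▸ ha₀)
    have hsum' : ∑ i ∈ J₁, θ i + ∑ i ∈ W \ J₁, θ i = 0 := by
      rw [add_comm, sum_sdiff hJW, hsum]
    have hshift₁ := isShiftOn_moveWeight_left (θ := θ) ha₀b₀ hb₀
    have hshift₂ :=
      isShiftOn_moveWeight_right (θ := θ) ha₀b₀ (fun h => (mem_sdiff.1 h).2 ha₀) hsum'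
    have hW' : W \ J₁ ≠ W := fun h => (mem_sdiff.1 (h ▸ hJW ha₀)).2 ha₀
    exact g.maxEdgeVanishes (by rwa [union_sdiff_of_subset hJW]) hsum'
      (hJle.lt_of_ne (hgen J₁ hJW hJne hJW')) hshift₁ hshift₂ hJcl
      (fun f hf => hsmall₀ f (hT.subset hf) (hT.tl_ne_hd f hf))
      (ih₁ hS₁ (hshift₁.sum_eq_zero ha₀) (hshift₁.genericOn hJW hJW' hgen))
      (ih₂ hS₂ (hshift₂.sum_eq_zero g.right_mem) (hshift₂.genericOn sdiff_subset hW' hgen))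

end Vanishing

theorem statement19_general {V E : Type} [Fintype V] [Fintype E] [LinearOrder E]
    (tl hd : E → V)
    (k : Type) [Field k]
    (θ : V → ℝ) (hgen : Generic θ) (hθ : ∑ i, θ i = 0)
    (x xs : E → k)
    (T : Finset E) (hT : TreeAssign tl hd x xs Finset.univ Finset.univ θ T)
    (e : E) (hloop : tl e ≠ hd e) (hmax : ∀ f : E, tl f ≠ hd f → f ≤ e) (heT : e ∉ T)
    (a : E)
    (haC : a ∈ insert e
      (T.filter fun f => ¬ joinedRel tl hd ↑(T.erase f) (tl e) (hd e)))
    (hamin : ∀ f ∈ insert e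
      (T.filter fun f => ¬ joinedRel tl hd ↑(T.erase f) (tl e) (hd e)), a ≤ f)
    (hae : a ≠ e) :
    (((0 < ∑ j ∈ component tl hd (T.erase a) (hd a), θ j) ∧
        tl e ∈ component tl hd (T.erase a) (hd a)) ∨
      ((¬ (0 < ∑ j ∈ component tl hd (T.erase a) (hd a), θ j)) ∧
        hd e ∈ component tl hd (T.erase a) (hd a)) →
      xs e = 0) ∧
    (¬ (((0 < ∑ j ∈ component tl hd (T.erase a) (hd a), θ j) ∧
        tl e ∈ component tl hd (T.erase a) (hd a)) ∨
      ((¬ (0 < ∑ j ∈ component tl hd (T.erase a) (hd a), θ j)) ∧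
        hd e ∈ component tl hd (T.erase a) (hd a))) →
      x e = 0) := by
  obtain ⟨haT, hcut⟩ := mem_filter.1 ((mem_insert.1 haC).resolve_left hae)
  have ha : IsMinCycleEdge tl hd T e a := ⟨haT, hcut, fun f hf hcutf =>
    hamin f (mem_insert_of_mem (mem_filter.2 ⟨hf, hcutf⟩))⟩
  exact hT.maxEdgeVanishes (fun _ _ => ⟨mem_univ _, mem_univ _⟩) hθ
    (fun J _ => hgen J) e a ⟨mem_univ e, hloop, fun f _ => hmax f⟩ heT ha

/-- let `T` be the tree assigned to a stable pair `(x, xs)` satisfying the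
moment map equations, `e` the largest non-loop edge with `e ∉ T`, and `a ≠ e` the
smallest edge of the fundamental cycle `C(T, e)`.  If the `a`-induced orientation on `e`
is opposite to its orientation in `Q` then `x e = 0`, otherwise `xs e = 0`. -/
theorem statement19 {V E : Type} [Fintype V] [Nonempty V] [Fintype E] [LinearOrder E]
    (tl hd : E → V) (hQ : IsConn tl hd Set.univ)
    (k : Type) [Field k]
    (θ : V → ℝ) (hgen : Generic θ) (hθ : ∑ i, θ i = 0)
    (lam : V → k) (hlam : ∑ i, lam i = 0)
    (x xs : E → k)
    (hstab : StableSub tl hd θ x xs Finset.univ Set.univ)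
    (hmm : MomentMap tl hd lam x xs)
    (T : Finset E) (hT : TreeAssign tl hd x xs Finset.univ Finset.univ θ T)
    (e : E) (hloop : tl e ≠ hd e) (hmax : ∀ f : E, tl f ≠ hd f → f ≤ e) (heT : e ∉ T)
    (a : E)
    (haC : a ∈ insert e
      (T.filter fun f => ¬ joinedRel tl hd ↑(T.erase f) (tl e) (hd e)))
    (hamin : ∀ f ∈ insert e
      (T.filter fun f => ¬ joinedRel tl hd ↑(T.erase f) (tl e) (hd e)), a ≤ f)
    (hae : a ≠ e) :
    (((0 < ∑ j ∈ component tl hd (T.erase a) (hd a), θ j) ∧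
        tl e ∈ component tl hd (T.erase a) (hd a)) ∨
      ((¬ (0 < ∑ j ∈ component tl hd (T.erase a) (hd a), θ j)) ∧
        hd e ∈ component tl hd (T.erase a) (hd a)) →
      xs e = 0) ∧
    (¬ (((0 < ∑ j ∈ component tl hd (T.erase a) (hd a), θ j) ∧
        tl e ∈ component tl hd (T.erase a) (hd a)) ∨
      ((¬ (0 < ∑ j ∈ component tl hd (T.erase a) (hd a), θ j)) ∧
        hd e ∈ component tl hd (T.erase a) (hd a))) →
      x e = 0) :=
  statement19_general tl hd k θ hgen hθ x xs T hT e hloop hmax heT a haC hamin hae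

end
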